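/- arXiv:1903.05767 — 5 statements merged into one kernel-verified Lean document; each statement's English description precedes it below -/
import Mathlib

section
/- Under the hypotheses of the generalized SDP bound (symmetric polynomial F with triple-sum lower bound N³f_0, F(x,x,1) ≤ B + 2g_T(x) on [-1,cos θ], F(x,y,z) ≤ g_T(x)+g_T(y)+g_T(z) on D(θ)), suppose T ⊆ [-1, cos θ] and g(t) ≤ -a < 0 for all t ∈ T. Then for every spherical code C of size N with minimal angular distance θ, the distance distribution satisfies A(T) := (1/N) · #{(u,v) ∈ C² : u ≠ v, u·v ∈ T} ≤ (2/N)·⌊Q⌋ where Q := (F(1,1,1) + 3(N-1)B - f_0 N²)/(6a). In particular, if T = {t} and Q < 1, then no two distinct points of C have inner product t. -/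
/-!
Split the triple sum `∑ x y z ∈ C, F ⟪x, y⟫ ⟪x, z⟫ ⟪y, z⟫` according to which of `x, y, z`
coincide. With `w u v = B` for `u = v` and `w u v = g_T ⟪u, v⟫` otherwise, every term is at most
`w x y + w x z + w y z`, plus `F 1 1 1 - 3 B` when `x = y = z`: for distinct points this is the
hypothesis on `D(θ)` (the Gram determinant of three unit vectors is nonnegative), and when
exactly two coincide it is the bound on `F s s 1`. Since `g_T ≤ -a` on `T` and `g_T ≤ 0`
elsewhere, `∑ u v ∈ C, w u v ≤ N B - a N A(T)`, so the positivity hypothesis gives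
`N³ f₀ ≤ N (F 1 1 1 + 3 (N - 1) B - 3 a N A(T))`, i.e. `N A(T) ≤ 2 Q`. Finally `N A(T)` counts
ordered pairs, so it is even and hence at most `2 ⌊Q⌋`.
-/

open scoped RealInnerProductSpace
open Finset

theorem Finset.even_card_of_involutive {α : Type*} {s : Finset α} {g : α → α}
    (hg : Function.Involutive g) (hmem : ∀ a ∈ s, g a ∈ s) (hne : ∀ a ∈ s, g a ≠ a) :
    Even #s := by
  rw [← ZMod.natCast_eq_zero_iff_even, card_eq_sum_ones, Nat.cast_sum, Nat.cast_one]
  exact sum_involution (fun a _ => g a) (fun _ _ => by decide) (fun a ha _ => hne a ha) hmem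
    (fun a _ => hg a)

theorem gram_det_nonneg_of_norm_eq_one {E : Type*} [NormedAddCommGroup E]
    [InnerProductSpace ℝ E] {u v w : E} (hu : ‖u‖ = 1) (hv : ‖v‖ = 1) (hw : ‖w‖ = 1) :
    0 ≤ 1 + 2 * ⟪u, v⟫ * ⟪u, w⟫ * ⟪v, w⟫ - ⟪u, v⟫ ^ 2 - ⟪u, w⟫ ^ 2 - ⟪v, w⟫ ^ 2 := by
  have h := (Matrix.posSemidef_gram ℝ ![u, v, w]).det_nonneg
  simp only [Matrix.det_fin_three, Matrix.gram, Matrix.of_apply, Matrix.cons_val_zero,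
    Matrix.cons_val_one, Matrix.cons_val, inner_self_eq_norm_sq_to_K, Real.ringHom_apply, hu, hv,
    hw, real_inner_comm u v, real_inner_comm u w, real_inner_comm v w] at h
  linarith

theorem natCast_le_two_mul_floor_of_even {m : ℕ} (hm : Even m) {x : ℝ} (h : (m : ℝ) ≤ 2 * x) :
    (m : ℝ) ≤ 2 * ⌊x⌋ := by
  obtain ⟨k, rfl⟩ := hm
  have hk : (k : ℤ) ≤ ⌊x⌋ := Int.le_floor.mpr (by push_cast at h ⊢; linarith)
  have : (k : ℝ) ≤ ⌊x⌋ := by exact_mod_cast hk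
  push_cast
  linarith

theorem sum_sum_sum_le_of_le_add {α : Type*} [DecidableEq α] (C : Finset α)
    (Φ : α → α → α → ℝ) (φ : α → α → ℝ) (κ : ℝ)
    (h : ∀ x ∈ C, ∀ y ∈ C, ∀ z ∈ C,
      Φ x y z ≤ (if x = y ∧ y = z then κ else 0) + φ x y + φ x z + φ y z) :
    ∑ x ∈ C, ∑ y ∈ C, ∑ z ∈ C, Φ x y z ≤ #C * κ + 3 * #C * ∑ x ∈ C, ∑ y ∈ C, φ x y := by
  calc ∑ x ∈ C, ∑ y ∈ C, ∑ z ∈ C, Φ x y z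
      ≤ ∑ x ∈ C, ∑ y ∈ C, ∑ z ∈ C,
          ((if x = y ∧ y = z then κ else 0) + φ x y + φ x z + φ y z) :=
        sum_le_sum fun x hx => sum_le_sum fun y hy => sum_le_sum fun z hz => h x hx y hy z hz
    _ = #C * κ + 3 * #C * ∑ x ∈ C, ∑ y ∈ C, φ x y := by
      simp only [ite_and, sum_add_distrib, sum_ite_irrel, sum_ite_eq, sum_const_zero, sum_const,
        nsmul_eq_mul, ← mul_sum, sum_ite_mem, inter_self]
      ring

def IsSphericalCode {E : Type*} [NormedAddCommGroup E] [InnerProductSpace ℝ E] (C : Finset E)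
    (c : ℝ) : Prop :=
  (∀ x ∈ C, ‖x‖ = 1) ∧ ∀ x ∈ C, ∀ y ∈ C, x ≠ y → ⟪x, y⟫ ≤ c

section InnerProductSpace

variable {E : Type*} [NormedAddCommGroup E] [InnerProductSpace ℝ E]

theorem even_card_filter_ne_and_inner_mem (C : Finset E) (T : Set ℝ)
    [DecidablePred fun p : E × E => p.1 ≠ p.2 ∧ ⟪p.1, p.2⟫ ∈ T] :
    Even #{p ∈ C ×ˢ C | p.1 ≠ p.2 ∧ ⟪p.1, p.2⟫ ∈ T} := by
  refine even_card_of_involutive Prod.swap_swap (fun p hp => ?_) fun p hp => ?_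
  · simp only [mem_filter, mem_product, Prod.fst_swap, Prod.snd_swap, real_inner_comm p.1] at hp ⊢
    exact ⟨hp.1.symm, hp.2.1.symm, hp.2.2⟩
  · exact fun h => (mem_filter.mp hp).2.1 (Prod.ext_iff.mp h).2

def pairWeight [DecidableEq E] (B : ℝ) (G : ℝ → ℝ) (u v : E) : ℝ :=
  if u = v then B else G ⟪u, v⟫

theorem sum_sum_pairWeight_le [DecidableEq E] (C : Finset E) {T : Set ℝ} {a B : ℝ}
    {G : ℝ → ℝ} (hGT : ∀ s ∈ T, G s ≤ -a) (hG : ∀ s, G s ≤ 0)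
    [DecidablePred fun p : E × E => p.1 ≠ p.2 ∧ ⟪p.1, p.2⟫ ∈ T] :
    ∑ x ∈ C, ∑ y ∈ C, pairWeight B G x y ≤
      #C * B - a * #{p ∈ C ×ˢ C | p.1 ≠ p.2 ∧ ⟪p.1, p.2⟫ ∈ T} := by
  set S := {p ∈ C ×ˢ C | p.1 ≠ p.2 ∧ ⟪p.1, p.2⟫ ∈ T}
  have hS : (#S : ℝ) = ∑ x ∈ C, ∑ y ∈ C, if (x, y) ∈ S then 1 else 0 := by
    rw [← sum_product (f := fun p => if p ∈ S then (1 : ℝ) else 0), sum_boole,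
      filter_mem_eq_inter, inter_eq_right.mpr (filter_subset _ _)]
  calc ∑ x ∈ C, ∑ y ∈ C, pairWeight B G x y
      ≤ ∑ x ∈ C, ∑ y ∈ C, ((if x = y then B else 0) - a * if (x, y) ∈ S then 1 else 0) := by
        refine sum_le_sum fun x hx => sum_le_sum fun y hy => ?_
        unfold pairWeight
        by_cases hxy : x = y
        · simp [S, hxy]
        · by_cases hT : ⟪x, y⟫ ∈ T
          · simp [S, hxy, hT, hx, hy, hGT]
          · simp [S, hxy, hT, hG]
    _ = #C * B - a * #S := by
        rw [hS, mul_sum]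
        simp only [mul_sum, sum_sub_distrib]
        simp [sum_ite_eq]

namespace IsSphericalCode

variable {C : Finset E} {c : ℝ}

theorem inner_self_eq_one (hC : IsSphericalCode C c) {x : E} (hx : x ∈ C) : ⟪x, x⟫ = 1 := by
  rw [real_inner_self_eq_norm_sq, hC.1 x hx, one_pow]

theorem inner_mem_Icc (hC : IsSphericalCode C c) {x y : E} (hx : x ∈ C) (hy : y ∈ C)
    (hxy : x ≠ y) : ⟪x, y⟫ ∈ Set.Icc (-1) c := by
  refine ⟨?_, hC.2 x hx y hy hxy⟩
  have h := abs_real_inner_le_norm x y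
  rw [hC.1 x hx, hC.1 y hy, mul_one] at h
  exact neg_le_of_abs_le h

variable {F : ℝ → ℝ → ℝ → ℝ} {B : ℝ} {G : ℝ → ℝ}

theorem apply_inner_le [DecidableEq E] (hC : IsSphericalCode C c)
    (hFsymm : ∀ x y z : ℝ, F x y z = F y x z ∧ F x y z = F x z y)
    (hFdiag : ∀ s ∈ Set.Icc (-1 : ℝ) c, F s s 1 ≤ B + 2 * G s)
    (hFD : ∀ s t r : ℝ, s ∈ Set.Icc (-1 : ℝ) c → t ∈ Set.Icc (-1 : ℝ) c →
      r ∈ Set.Icc (-1 : ℝ) c → 0 ≤ 1 + 2 * s * t * r - s ^ 2 - t ^ 2 - r ^ 2 →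
      F s t r ≤ G s + G t + G r)
    {x y z : E} (hx : x ∈ C) (hy : y ∈ C) (hz : z ∈ C) :
    F ⟪x, y⟫ ⟪x, z⟫ ⟪y, z⟫ ≤ (if x = y ∧ y = z then F 1 1 1 - 3 * B else 0) +
      pairWeight B G x y + pairWeight B G x z + pairWeight B G y z := by
  have hdiag {u v : E} (hu : u ∈ C) (hv : v ∈ C) (huv : u ≠ v) :
      F ⟪u, v⟫ ⟪u, v⟫ 1 ≤ B + 2 * G ⟪u, v⟫ :=
    hFdiag _ (hC.inner_mem_Icc hu hv huv)
  have hswap (s : ℝ) : F s 1 s = F s s 1 := (hFsymm s s 1).2.symm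
  rcases eq_or_ne x y with rfl | hxy
  · rcases eq_or_ne x z with rfl | hxz
    · simp only [pairWeight, and_self, if_true, hC.inner_self_eq_one hx]
      linarith
    · simp only [pairWeight, hxz, true_and, if_true, if_false, hC.inner_self_eq_one hx,
        (hFsymm 1 _ _).1, hswap]
      linarith [hdiag hx hz hxz]
  · rcases eq_or_ne x z with rfl | hxz
    · simp only [pairWeight, hxy, hxy.symm, false_and, if_true, if_false,
        hC.inner_self_eq_one hx, real_inner_comm x y, hswap]
      linarith [hdiag hx hy hxy]
    rcases eq_or_ne y z with rfl | hyz
    · simp only [pairWeight, hxy, false_and, if_true, if_false, hC.inner_self_eq_one hy]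
      linarith [hdiag hx hy hxy]
    · simp only [pairWeight, hxy, hxz, hyz, false_and, if_false, zero_add]
      exact hFD _ _ _ (hC.inner_mem_Icc hx hy hxy) (hC.inner_mem_Icc hx hz hxz)
        (hC.inner_mem_Icc hy hz hyz) (gram_det_nonneg_of_norm_eq_one
          (hC.1 x hx) (hC.1 y hy) (hC.1 z hz))

theorem sum_sum_sum_apply_inner_le [DecidableEq E] (hC : IsSphericalCode C c)
    (hFsymm : ∀ x y z : ℝ, F x y z = F y x z ∧ F x y z = F x z y)
    (hFdiag : ∀ s ∈ Set.Icc (-1 : ℝ) c, F s s 1 ≤ B + 2 * G s)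
    (hFD : ∀ s t r : ℝ, s ∈ Set.Icc (-1 : ℝ) c → t ∈ Set.Icc (-1 : ℝ) c →
      r ∈ Set.Icc (-1 : ℝ) c → 0 ≤ 1 + 2 * s * t * r - s ^ 2 - t ^ 2 - r ^ 2 →
      F s t r ≤ G s + G t + G r)
    {T : Set ℝ} {a : ℝ} (hGT : ∀ s ∈ T, G s ≤ -a) (hG : ∀ s, G s ≤ 0)
    [DecidablePred fun p : E × E => p.1 ≠ p.2 ∧ ⟪p.1, p.2⟫ ∈ T] :
    ∑ x ∈ C, ∑ y ∈ C, ∑ z ∈ C, F ⟪x, y⟫ ⟪x, z⟫ ⟪y, z⟫ ≤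
      #C * (F 1 1 1 + 3 * (#C - 1) * B - 3 * a * #{p ∈ C ×ˢ C | p.1 ≠ p.2 ∧ ⟪p.1, p.2⟫ ∈ T}) :=
  calc ∑ x ∈ C, ∑ y ∈ C, ∑ z ∈ C, F ⟪x, y⟫ ⟪x, z⟫ ⟪y, z⟫
      ≤ #C * (F 1 1 1 - 3 * B) + 3 * #C * ∑ x ∈ C, ∑ y ∈ C, pairWeight B G x y :=
        sum_sum_sum_le_of_le_add C _ _ _ fun _ hx _ hy _ hz =>
          hC.apply_inner_le hFsymm hFdiag hFD hx hy hz
    _ ≤ #C * (F 1 1 1 - 3 * B) +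
          3 * #C * (#C * B - a * #{p ∈ C ×ˢ C | p.1 ≠ p.2 ∧ ⟪p.1, p.2⟫ ∈ T}) := by
        gcongr
        exact sum_sum_pairWeight_le C hGT hG
    _ = _ := by ring

end IsSphericalCode

end InnerProductSpace

open Classical in
theorem distance_distribution_upper_bound_general (n : ℕ) (θ f₀ B a : ℝ)
    (T : Set ℝ) (g : ℝ → ℝ)
    (ha : 0 < a) (hga : ∀ t ∈ T, g t ≤ -a)
    (F : ℝ → ℝ → ℝ → ℝ)
    (hFsymm : ∀ x y z : ℝ, F x y z = F y x z ∧ F x y z = F x z y)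
    (hFpsd : ∀ (C : Finset (EuclideanSpace ℝ (Fin n))), (∀ x ∈ C, ‖x‖ = 1) →
      (C.card : ℝ) ^ 3 * f₀ ≤ ∑ x ∈ C, ∑ y ∈ C, ∑ z ∈ C, F ⟪x, y⟫ ⟪x, z⟫ ⟪y, z⟫)
    (gT : ℝ → ℝ) (hgT : ∀ x, gT x = if x ∈ T then g x else 0)
    (hFdiag : ∀ x ∈ Set.Icc (-1 : ℝ) (Real.cos θ), F x x 1 ≤ B + 2 * gT x)
    (hFD : ∀ x y z : ℝ, x ∈ Set.Icc (-1 : ℝ) (Real.cos θ) →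
      y ∈ Set.Icc (-1 : ℝ) (Real.cos θ) → z ∈ Set.Icc (-1 : ℝ) (Real.cos θ) →
      0 ≤ 1 + 2*x*y*z - x^2 - y^2 - z^2 → F x y z ≤ gT x + gT y + gT z)
    (C : Finset (EuclideanSpace ℝ (Fin n))) (hCne : 0 < C.card)
    (hCsph : ∀ x ∈ C, ‖x‖ = 1)
    (hCcode : ∀ x ∈ C, ∀ y ∈ C, x ≠ y → ⟪x, y⟫ ≤ Real.cos θ)
    (N : ℝ) (hN : N = (C.card : ℝ))
    (Q : ℝ) (hQ : Q = (F 1 1 1 + 3 * (N - 1) * B - f₀ * N ^ 2) / (6 * a)) :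
    (((C ×ˢ C).filter (fun p => p.1 ≠ p.2 ∧ ⟪p.1, p.2⟫ ∈ T)).card : ℝ) / N ≤
      2 / N * (⌊Q⌋ : ℝ) ∧
    (∀ t : ℝ, T = {t} → Q < 1 →
      ((C ×ˢ C).filter (fun p => p.1 ≠ p.2 ∧ ⟪p.1, p.2⟫ ∈ T)).card = 0) := by
  have hN0 : 0 < N := hN ▸ Nat.cast_pos.mpr hCne
  have hgT_mem : ∀ s ∈ T, gT s ≤ -a := fun s hs => by rw [hgT, if_pos hs]; exact hga s hs
  have hgT_nonpos : ∀ s, gT s ≤ 0 := fun s => by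
    rw [hgT]; split_ifs with hs
    exacts [(hga s hs).trans (neg_nonpos.mpr ha.le), le_rfl]
  have hbound := (hFpsd C hCsph).trans
    (IsSphericalCode.sum_sum_sum_apply_inner_le ⟨hCsph, hCcode⟩ hFsymm hFdiag hFD hgT_mem
      hgT_nonpos)
  rw [← hN] at hbound
  set m := ((C ×ˢ C).filter (fun p => p.1 ≠ p.2 ∧ ⟪p.1, p.2⟫ ∈ T)).card
  have hm : (m : ℝ) ≤ 2 * Q := by
    have h : N * (N ^ 2 * f₀) ≤ N * (F 1 1 1 + 3 * (N - 1) * B - 3 * a * m) := by linarith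
    have h' := le_of_mul_le_mul_left h hN0
    rw [hQ, mul_div_assoc', le_div_iff₀ (by positivity)]
    linarith
  have hfloor := natCast_le_two_mul_floor_of_even (even_card_filter_ne_and_inner_mem C T) hm
  refine ⟨?_, fun _ _ hQ1 => ?_⟩
  · rw [div_mul_eq_mul_div]
    exact div_le_div_of_nonneg_right hfloor hN0.le
  · have hQ0 : (⌊Q⌋ : ℝ) ≤ 0 := by
      exact_mod_cast Int.lt_add_one_iff.mp (Int.floor_lt.mpr (by simpa using hQ1))
    exact_mod_cast le_antisymm (hfloor.trans (by linarith)) m.cast_nonneg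

open Classical in
/-- Corollary 1: upper bound for the distance distribution `A(T)` of a spherical
code, where `g ≤ -a < 0` on `T ⊆ [-1, cos θ]`. In particular if `T = {t}` and
`Q < 1` then no two distinct code points have inner product `t`. -/
theorem distance_distribution_upper_bound (n : ℕ) (θ f₀ B a : ℝ) (hf₀ : 0 < f₀)
    (T : Set ℝ) (hT : T ⊆ Set.Icc (-1 : ℝ) (Real.cos θ)) (g : ℝ → ℝ)
    (ha : 0 < a) (hga : ∀ t ∈ T, g t ≤ -a)
    (F : ℝ → ℝ → ℝ → ℝ)
    (hFsymm : ∀ x y z : ℝ, F x y z = F y x z ∧ F x y z = F x z y)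
    (hFpsd : ∀ (C : Finset (EuclideanSpace ℝ (Fin n))), (∀ x ∈ C, ‖x‖ = 1) →
      (C.card : ℝ) ^ 3 * f₀ ≤ ∑ x ∈ C, ∑ y ∈ C, ∑ z ∈ C, F ⟪x, y⟫ ⟪x, z⟫ ⟪y, z⟫)
    (gT : ℝ → ℝ) (hgT : ∀ x, gT x = if x ∈ T then g x else 0)
    (hFdiag : ∀ x ∈ Set.Icc (-1 : ℝ) (Real.cos θ), F x x 1 ≤ B + 2 * gT x)
    (hFD : ∀ x y z : ℝ, x ∈ Set.Icc (-1 : ℝ) (Real.cos θ) →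
      y ∈ Set.Icc (-1 : ℝ) (Real.cos θ) → z ∈ Set.Icc (-1 : ℝ) (Real.cos θ) →
      0 ≤ 1 + 2*x*y*z - x^2 - y^2 - z^2 → F x y z ≤ gT x + gT y + gT z)
    (C : Finset (EuclideanSpace ℝ (Fin n))) (hCne : 0 < C.card)
    (hCsph : ∀ x ∈ C, ‖x‖ = 1)
    (hCcode : ∀ x ∈ C, ∀ y ∈ C, x ≠ y → ⟪x, y⟫ ≤ Real.cos θ)
    (N : ℝ) (hN : N = (C.card : ℝ))
    (Q : ℝ) (hQ : Q = (F 1 1 1 + 3 * (N - 1) * B - f₀ * N ^ 2) / (6 * a)) :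
    (((C ×ˢ C).filter (fun p => p.1 ≠ p.2 ∧ ⟪p.1, p.2⟫ ∈ T)).card : ℝ) / N ≤
      2 / N * (⌊Q⌋ : ℝ) ∧
    (∀ t : ℝ, T = {t} → Q < 1 →
      ((C ×ˢ C).filter (fun p => p.1 ≠ p.2 ∧ ⟪p.1, p.2⟫ ∈ T)).card = 0) :=
  distance_distribution_upper_bound_general n θ f₀ B a T g ha hga F hFsymm hFpsd gT hgT hFdiag hFD C
    hCne hCsph hCcode N hN Q hQ
end

section
/- The polynomial g(t) = (2t-1)t²(2t+1)²(t+1), when expanded in the Gegenbauer polynomials G_k^{(8)} for ℝ⁸ (normalized with G_k^{(8)}(1) = 1) as g(t) = Σ_{k=0}^6 c_k G_k^{(8)}(t), has all coefficients c_k > 0, and moreover g(1) = 240·c_0. -/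
/-!
The conditions on `G` pin down each `G k`: the moment functional `p ↦ ∫₋₁¹ p w` of a weight
`w > 0` is positive definite, so a polynomial of degree `k` orthogonal to all polynomials of lower
degree is unique up to a scalar, which the normalization at `1` fixes. Hence `G k` is the explicit
normalized Gegenbauer polynomial, whose orthogonality is checked from the moment recursion
`(n + 1) Mₙ = (n + 2α + 3) Mₙ₊₂` of the weight `(1 - t²)^α` (integration by parts). The expansion of
`g` is then a polynomial identity with explicit positive coefficients.
-/

open Set intervalIntegral
open scoped NNReal

namespace Polynomial

section Orthogonality

variable {K : Type*} [Field K] (L : K[X] →ₗ[K] K)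

theorem forall_degreeLT_of_forall_X_pow {n : ℕ} {p : K[X]}
    (h : ∀ j < n, L (p * X ^ j) = 0) : ∀ q ∈ degreeLT K n, L (p * q) = 0 := by
  classical
  suffices degreeLT K n ≤ LinearMap.ker (L ∘ₗ LinearMap.mulLeft K p) from fun q hq => this hq
  rw [degreeLT_eq_span_X_pow, Submodule.span_le]
  intro q hq
  obtain ⟨j, hj, rfl⟩ := Finset.mem_image.mp hq
  exact h j (Finset.mem_range.mp hj)

theorem Sequence.forall_degreeLT_of_pairwise (S : Sequence K)
    (h : ∀ j k, j ≠ k → L (S j * S k) = 0) (k : ℕ) :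
    ∀ q ∈ degreeLT K k, L (S k * q) = 0 := by
  suffices degreeLT K k ≤ LinearMap.ker (L ∘ₗ LinearMap.mulLeft K (S k)) from fun q hq => this hq
  rw [← S.span_degreeLT fun i _ => (leadingCoeff_ne_zero.mpr (S.ne_zero i)).isUnit,
    Submodule.span_le]
  rintro _ ⟨j, hj, rfl⟩
  exact h k j (Nat.ne_of_gt hj)

theorem eq_of_forall_degreeLT (hL : ∀ p, L (p * p) = 0 → p = 0) {n : ℕ} {P Q : K[X]}
    (hP : P.degree = n) (hQ : Q.degree = n)
    (hPL : ∀ q ∈ degreeLT K n, L (P * q) = 0) (hQL : ∀ q ∈ degreeLT K n, L (Q * q) = 0)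
    {x : K} (hx : P.eval x = Q.eval x) (hQx : Q.eval x ≠ 0) : P = Q := by
  have hP0 : P ≠ 0 := by rintro rfl; simp at hP
  have hQ0 : Q ≠ 0 := by rintro rfl; simp at hQ
  set a := P.leadingCoeff / Q.leadingCoeff
  have ha : a ≠ 0 := by simp [a, hP0, hQ0]
  have hr : P - C a * Q ∈ degreeLT K n := by
    rw [mem_degreeLT, ← hP]
    exact degree_sub_lt_left (by rw [degree_C_mul ha, hP, hQ]) hP0 (by simp [a, hQ0])
  have hPQ : P = C a * Q := by
    refine sub_eq_zero.mp (hL _ ?_)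
    rw [sub_mul, map_sub, hPL _ hr, mul_assoc, C_mul', map_smul, hQL _ hr, smul_zero, sub_zero]
  have ha1 : a = 1 := by
    rw [hPQ, eval_mul, eval_C] at hx
    exact (mul_eq_right₀ hQx).mp hx
  rw [hPQ, ha1, C_1, one_mul]

end Orthogonality

section Moments

noncomputable def momentFunctional (w : C(ℝ, ℝ)) (a b : ℝ) : ℝ[X] →ₗ[ℝ] ℝ where
  toFun p := ∫ t in a..b, p.eval t * w t
  map_add' p q := by
    simp only [eval_add, add_mul]
    exact integral_add ((p.continuous.mul w.continuous).intervalIntegrable _ _)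
      ((q.continuous.mul w.continuous).intervalIntegrable _ _)
  map_smul' c p := by
    simp only [eval_smul, smul_eq_mul, mul_assoc, intervalIntegral.integral_const_mul,
      RingHom.id_apply]

theorem momentFunctional_apply (w : C(ℝ, ℝ)) (a b : ℝ) (p : ℝ[X]) :
    momentFunctional w a b p = ∫ t in a..b, p.eval t * w t := rfl

theorem eq_zero_of_momentFunctional_mul_self {w : C(ℝ, ℝ)} {a b : ℝ} (hab : a < b)
    (hw : ∀ t ∈ Ioo a b, 0 < w t) {p : ℝ[X]} (hp : momentFunctional w a b (p * p) = 0) :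
    p = 0 := by
  by_contra hp0
  obtain ⟨c, hc, hpc⟩ : ∃ c ∈ Ioo a b, p.eval c ≠ 0 := by
    by_contra! h
    exact hp0 (eq_zero_of_infinite_isRoot p ((Ioo_infinite hab).mono h))
  have hw' : ∀ t ∈ Icc a b, 0 ≤ w t := by
    rw [← closure_Ioo hab.ne]
    exact (isClosed_le continuous_const w.continuous).closure_subset_iff.mpr
      fun t ht => (hw t ht).le
  refine hp.not_gt (integral_pos hab (by fun_prop) (fun t ht => ?_) ⟨c, Ioo_subset_Icc_self hc, ?_⟩)
  · rw [eval_mul]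
    exact mul_nonneg (mul_self_nonneg _) (hw' t (Ioc_subset_Icc_self ht))
  · rw [eval_mul]
    exact mul_pos (mul_self_pos.mpr hpc) (hw c hc)

theorem momentFunctional_X_of_even {w : C(ℝ, ℝ)} (hw : ∀ t, w (-t) = w t) (a : ℝ) :
    momentFunctional w (-a) a X = 0 := by
  have h := integral_comp_neg (a := -a) (b := a) fun t => t * w t
  simp only [neg_neg, hw, neg_mul, intervalIntegral.integral_neg] at h
  rw [momentFunctional_apply]
  simp only [eval_X]
  linarith

noncomputable def gegenbauerWeight (α : ℝ≥0) : C(ℝ, ℝ) where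
  toFun t := (1 - t ^ 2) ^ (α : ℝ)
  continuous_toFun := (continuous_const.sub (continuous_pow 2)).rpow_const fun _ => Or.inr α.2

theorem gegenbauerWeight_apply (α : ℝ≥0) (t : ℝ) :
    gegenbauerWeight α t = (1 - t ^ 2) ^ (α : ℝ) := rfl

theorem gegenbauerWeight_pos (α : ℝ≥0) {t : ℝ} (ht : t ∈ Ioo (-1) 1) :
    0 < gegenbauerWeight α t :=
  Real.rpow_pos_of_pos (by nlinarith [ht.1, ht.2]) _

theorem hasDerivAt_X_pow_mul_gegenbauerWeight (α : ℝ≥0) (n : ℕ) {t : ℝ} (ht : t ∈ Icc (-1) 1) :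
    HasDerivAt (fun t => t ^ (n + 1) * (1 - t ^ 2) ^ ((α : ℝ) + 1))
      (((n + 1 : ℝ) * t ^ n - (n + 2 * α + 3) * t ^ (n + 2)) * gegenbauerWeight α t) t := by
  have hbase : 0 ≤ 1 - t ^ 2 := by nlinarith [ht.1, ht.2]
  have h1 : HasDerivAt (fun t : ℝ => 1 - t ^ 2) (-(2 * t)) t := by
    simpa using (hasDerivAt_pow 2 t).const_sub 1
  have h2 := (Real.hasDerivAt_rpow_const (p := (α : ℝ) + 1) (Or.inr (by simp))).comp t h1
  refine ((hasDerivAt_pow (n + 1) t).mul h2).congr_deriv ?_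
  simp only [Function.comp_apply, Nat.add_sub_cancel, add_sub_cancel_right, gegenbauerWeight_apply,
    Real.rpow_add_one' hbase (by positivity : (α : ℝ) + 1 ≠ 0)]
  push_cast
  ring

theorem momentFunctional_X_pow_add_two (α : ℝ≥0) (n : ℕ) :
    momentFunctional (gegenbauerWeight α) (-1) 1 (X ^ (n + 2)) =
      (n + 1) / (n + 2 * α + 3) * momentFunctional (gegenbauerWeight α) (-1) 1 (X ^ n) := by
  have hftc := integral_eq_sub_of_hasDerivAt
    (fun t ht => hasDerivAt_X_pow_mul_gegenbauerWeight α n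
      (by rwa [uIcc_of_le (by norm_num : (-1 : ℝ) ≤ 1)] at ht))
    (((continuous_const.mul (continuous_pow n)).sub
      (continuous_const.mul (continuous_pow (n + 2)))).mul
        (gegenbauerWeight α).continuous |>.intervalIntegrable _ _)
  have hzero : momentFunctional (gegenbauerWeight α) (-1) 1
      (C (n + 1 : ℝ) * X ^ n - C (n + 2 * α + 3 : ℝ) * X ^ (n + 2)) = 0 := by
    rw [momentFunctional_apply]
    simpa [Real.zero_rpow (by positivity : (α : ℝ) + 1 ≠ 0)] using hftc
  rw [map_sub, C_mul', C_mul', map_smul, map_smul, smul_eq_mul, smul_eq_mul, sub_eq_zero] at hzero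
  rw [div_mul_eq_mul_div, hzero, mul_div_cancel_left₀ _ (by positivity)]

end Moments

section DimensionEight

/-- `G_k^{(8)} = C_k^{(3)} / C_k^{(3)}(1)`, from the recurrence
`(k + 6) G_{k+1} = (2k + 6) t G_k - k G_{k-1}`. -/
noncomputable def gegenbauerDim8 : Fin 7 → ℝ[X] :=
  ![1, X, C (8 / 7) * X ^ 2 - C (1 / 7), C (10 / 7) * X ^ 3 - C (3 / 7) * X,
    C (40 / 21) * X ^ 4 - C (20 / 21) * X ^ 2 + C (1 / 21),
    C (8 / 3) * X ^ 5 - C (40 / 21) * X ^ 3 + C (5 / 21) * X,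
    C (128 / 33) * X ^ 6 - C (40 / 11) * X ^ 4 + C (60 / 77) * X ^ 2 - C (5 / 231)]

theorem degree_gegenbauerDim8 (k : Fin 7) : (gegenbauerDim8 k).degree = k := by
  fin_cases k <;> simp [gegenbauerDim8] <;> compute_degree!

theorem eval_one_gegenbauerDim8 (k : Fin 7) : (gegenbauerDim8 k).eval 1 = 1 := by
  fin_cases k <;> simp [gegenbauerDim8] <;> norm_num

set_option maxHeartbeats 1000000 in
theorem momentFunctional_gegenbauerDim8_mul_X_pow (k : Fin 7) (j : ℕ) (hj : j < k) :
    momentFunctional (gegenbauerWeight (5 / 2)) (-1) 1 (gegenbauerDim8 k * X ^ j) = 0 := by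
  have hX := momentFunctional_X_of_even (w := gegenbauerWeight (5 / 2))
    (by simp [gegenbauerWeight_apply]) 1
  have hC (a : ℝ) : momentFunctional (gegenbauerWeight (5 / 2)) (-1) 1 (C a) =
      a * momentFunctional (gegenbauerWeight (5 / 2)) (-1) 1 1 := by
    rw [← mul_one (C a), C_mul', map_smul, smul_eq_mul]
  obtain ⟨k, hk⟩ := k
  simp only at hj
  interval_cases k <;> interval_cases j <;>
    simp [gegenbauerDim8, add_mul, sub_mul, ← pow_add, ← pow_succ, ← pow_succ', ← sq, ← pow_mul,
      C_mul', hC, momentFunctional_X_pow_add_two, hX] <;>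
    ring

theorem eq_gegenbauerDim8 (G : Sequence ℝ) (hnorm : ∀ k, (G k).eval 1 = 1)
    (horth : ∀ j k, j ≠ k → momentFunctional (gegenbauerWeight (5 / 2)) (-1) 1 (G j * G k) = 0)
    (k : Fin 7) : G k = gegenbauerDim8 k :=
  eq_of_forall_degreeLT _
    (fun _ => eq_zero_of_momentFunctional_mul_self (by norm_num) fun _ => gegenbauerWeight_pos _)
    (G.degree_eq k) (degree_gegenbauerDim8 k) (G.forall_degreeLT_of_pairwise _ horth k)
    (forall_degreeLT_of_forall_X_pow _ (momentFunctional_gegenbauerDim8_mul_X_pow k))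
    (x := 1) (by rw [hnorm, eval_one_gegenbauerDim8]) (by rw [eval_one_gegenbauerDim8]; simp)

noncomputable def delsarteE8Coeff : Fin 7 → ℝ :=
  ![3 / 40, 3 / 5, 15 / 8, 39 / 10, 399 / 80, 9 / 2, 33 / 16]

theorem delsarteE8Coeff_pos (k : Fin 7) : 0 < delsarteE8Coeff k := by
  fin_cases k <;> norm_num [delsarteE8Coeff]

theorem delsarteE8_eq_sum (t : ℝ) :
    (2 * t - 1) * t ^ 2 * (2 * t + 1) ^ 2 * (t + 1) =
      ∑ k : Fin 7, delsarteE8Coeff k * (gegenbauerDim8 k).eval t := by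
  simp [Fin.sum_univ_succ, delsarteE8Coeff, gegenbauerDim8]
  ring

end DimensionEight

end Polynomial

open Polynomial in
/-- The expansion of `g(t) = (2t-1) t² (2t+1)² (t+1)` in the Gegenbauer
polynomials for dimension 8 (characterized by their degrees, the normalization
`G k (1) = 1`, and orthogonality on `[-1,1]` with weight `(1-t²)^{5/2}`) has all
coefficients positive, and `g(1) = 240 c₀`. -/
theorem gegenbauer_expansion_dim8 (G : ℕ → Polynomial ℝ)
    (hdeg : ∀ k, (G k).degree = k)
    (hnorm : ∀ k, (G k).eval 1 = 1)
    (horth : ∀ j k, j ≠ k →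
      ∫ t in (-1 : ℝ)..1,
        (G j).eval t * (G k).eval t * (1 - t^2) ^ ((5 : ℝ)/2) = 0) :
    ∃ c : ℕ → ℝ, (∀ k ≤ 6, 0 < c k) ∧
      (∀ t : ℝ, (2*t - 1) * t^2 * (2*t + 1)^2 * (t + 1) =
        ∑ k ∈ Finset.range 7, c k * (G k).eval t) ∧
      (2*(1:ℝ) - 1) * 1^2 * (2*1 + 1)^2 * (1 + 1) = 240 * c 0 := by
  have hG : ∀ k : Fin 7, G k = gegenbauerDim8 k :=
    eq_gegenbauerDim8 ⟨G, hdeg⟩ hnorm fun j k hjk => by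
      simpa [momentFunctional_apply, gegenbauerWeight_apply] using horth j k hjk
  refine ⟨fun k => if h : k < 7 then delsarteE8Coeff ⟨k, h⟩ else 0,
    fun k hk => by simpa [Nat.lt_succ_of_le hk] using delsarteE8Coeff_pos ⟨k, by omega⟩,
    fun t => ?_, by norm_num [delsarteE8Coeff]⟩
  rw [delsarteE8_eq_sum, Finset.sum_range]
  simp [hG]
end

section
/- Let C be a (240, 8, π/3) spherical code, i.e., 240 points on S⁷ with pairwise inner products at most 1/2. Then for every u ∈ C and every v ∈ C with v ≠ u, the inner product u·v lies in {-1, -1/2, 0, 1/2}. -/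
/-!
Delsarte's linear programming bound in its equality case. With `g(t) = (2t-1)t²(2t+1)²(t+1)`,
`g(t) - 3/40 = (8t² + 12t + 6) G₄(t) + (3t + 9/5) G₂(t) + (3/40) t`, where `G₂`, `G₄` are the
monic Gegenbauer polynomials of `S⁷`. On the sphere, `G_k ⟪x, y⟫` is the Gram kernel of the
traceless part of `x^{⊗k}`, and sums and products of Gram kernels are Gram kernels, so
`∑_{x,y ∈ C} g ⟪x, y⟫ ≥ (3/40)|C|² = 18 |C| = |C| g(1)`. Thus the off-diagonal terms have
nonnegative sum; as `g ≤ 0` on `[-1, 1/2]`, each of them vanishes, i.e. every inner product of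
distinct points is a root of `g`.
-/

open scoped RealInnerProductSpace
open Finset Module

noncomputable def monicGegenbauer2 (n : ℕ) (t : ℝ) : ℝ := t ^ 2 - 1 / n

noncomputable def monicGegenbauer4 (n : ℕ) (t : ℝ) : ℝ :=
  t ^ 4 - 6 / (n + 4) * t ^ 2 + 3 / ((n + 2) * (n + 4))

theorem Finset.sum_mul_mul_const {α : Type*} (s : Finset α) (f g : α → ℝ) (K : ℝ) :
    ∑ i ∈ s, f i * (g i * K) = (∑ i ∈ s, f i * g i) * K := by
  simp only [Finset.sum_mul, mul_assoc]

section TracelessTensors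

variable {ι : Type} [Fintype ι] [DecidableEq ι]

local notation "δ" => (1 : Matrix ι ι ℝ)

noncomputable def tracelessSq (x : ι → ℝ) (i j : ι) : ℝ :=
  x i * x j - (Fintype.card ι : ℝ)⁻¹ * δ i j

noncomputable def tracelessQuartic (x : ι → ℝ) (i j k l : ι) : ℝ :=
  x i * x j * x k * x l
    - ((Fintype.card ι : ℝ) + 4)⁻¹ * (δ i j * x k * x l + δ i k * x j * x l + δ i l * x j * x k
      + δ j k * x i * x l + δ j l * x i * x k + δ k l * x i * x j)
    + (((Fintype.card ι : ℝ) + 2) * ((Fintype.card ι : ℝ) + 4))⁻¹ *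
      (δ i j * δ k l + δ i k * δ j l + δ i l * δ j k)

theorem sum_tracelessSq_mul (x y : ι → ℝ) (hx : ∑ i, x i * x i = 1)
    (hy : ∑ i, y i * y i = 1) :
    ∑ i, ∑ j, tracelessSq x i j * tracelessSq y i j =
      monicGegenbauer2 (Fintype.card ι) (∑ i, x i * y i) := by
  have hn : (Fintype.card ι : ℝ) ≠ 0 := by
    rintro hn
    simp_all [Fintype.card_eq_zero_iff]
  unfold tracelessSq
  -- With the coefficients generalised and both vectors bundled as `v i b`, `simp`'s AC order
  -- groups the factors by index, so that `← mul_sum` can factor the contracted sums.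
  generalize hc : (Fintype.card ι : ℝ)⁻¹ = c
  obtain ⟨v, rfl, rfl⟩ : ∃ v : ι → Bool → ℝ, x = (v · false) ∧ y = (v · true) :=
    ⟨fun i b => if b then y i else x i, rfl, rfl⟩
  simp only at hx hy
  simp only [Matrix.one_apply, sub_mul, mul_sub, sum_sub_distrib, ite_mul, mul_ite, zero_mul,
    mul_zero, mul_one, sum_ite_eq, mem_univ, if_true]
  simp only [mul_comm, mul_left_comm, mul_one, ← mul_sum, sum_mul_mul_const, sum_const,
    card_univ, nsmul_eq_mul, hx, hy]
  subst hc
  unfold monicGegenbauer2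
  field_simp
  ring

theorem sum_tracelessQuartic_mul (x y : ι → ℝ) (hx : ∑ i, x i * x i = 1)
    (hy : ∑ i, y i * y i = 1) :
    ∑ i, ∑ j, ∑ k, ∑ l, tracelessQuartic x i j k l * tracelessQuartic y i j k l =
      monicGegenbauer4 (Fintype.card ι) (∑ i, x i * y i) := by
  unfold tracelessQuartic
  generalize hc : ((Fintype.card ι : ℝ) + 4)⁻¹ = c
  generalize hd : (((Fintype.card ι : ℝ) + 2) * ((Fintype.card ι : ℝ) + 4))⁻¹ = d
  obtain ⟨v, rfl, rfl⟩ : ∃ v : ι → Bool → ℝ, x = (v · false) ∧ y = (v · true) :=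
    ⟨fun i b => if b then y i else x i, rfl, rfl⟩
  simp only at hx hy
  simp only [Matrix.one_apply, sub_mul, mul_sub, add_mul, mul_add, sum_add_distrib,
    sum_sub_distrib, ite_mul, mul_ite, zero_mul, mul_zero, one_mul, mul_one, sum_ite_eq,
    sum_ite_eq', mem_univ, if_true, sum_ite_irrel, sum_const_zero]
  simp only [mul_comm, mul_left_comm, mul_one, ← mul_sum, sum_mul_mul_const, sum_const,
    card_univ, nsmul_eq_mul, hx, hy]
  subst hc hd
  unfold monicGegenbauer4
  field_simp
  ring

end TracelessTensors

section GramKernels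

variable (E : Type*) [NormedAddCommGroup E] [InnerProductSpace ℝ E]

def IsGramKernelOnSphere (P : ℝ → ℝ) : Prop :=
  ∃ (κ : Type) (_ : Fintype κ) (F : E → κ → ℝ),
    ∀ x y : E, ‖x‖ = 1 → ‖y‖ = 1 → P ⟪x, y⟫ = ∑ k, F x k * F y k

variable {E}

namespace IsGramKernelOnSphere

variable {P Q : ℝ → ℝ}

theorem add (hP : IsGramKernelOnSphere E P) (hQ : IsGramKernelOnSphere E Q) :
    IsGramKernelOnSphere E (P + Q) := by
  obtain ⟨κ, _, F, hF⟩ := hP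
  obtain ⟨μ, _, G, hG⟩ := hQ
  refine ⟨κ ⊕ μ, inferInstance, fun x => Sum.elim (F x) (G x), fun x y hx hy => ?_⟩
  simp [Fintype.sum_sum_type, hF x y hx hy, hG x y hx hy]

theorem mul (hP : IsGramKernelOnSphere E P) (hQ : IsGramKernelOnSphere E Q) :
    IsGramKernelOnSphere E (P * Q) := by
  obtain ⟨κ, _, F, hF⟩ := hP
  obtain ⟨μ, _, G, hG⟩ := hQ
  refine ⟨κ × μ, inferInstance, fun x p => F x p.1 * G x p.2, fun x y hx hy => ?_⟩
  simp only [Pi.mul_apply, hF x y hx hy, hG x y hx hy, Fintype.sum_prod_type, sum_mul_sum]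
  exact sum_congr rfl fun _ _ => sum_congr rfl fun _ _ => by ring

theorem sum_sum_nonneg (hP : IsGramKernelOnSphere E P) {C : Finset E}
    (hC : ∀ x ∈ C, ‖x‖ = 1) : 0 ≤ ∑ x ∈ C, ∑ y ∈ C, P ⟪x, y⟫ := by
  obtain ⟨κ, _, F, hF⟩ := hP
  calc 0 ≤ ∑ k, (∑ x ∈ C, F x k) ^ 2 := sum_nonneg fun _ _ => sq_nonneg _
    _ = ∑ x ∈ C, ∑ y ∈ C, P ⟪x, y⟫ := by
      simp only [sq, sum_mul_sum]
      rw [sum_comm]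
      refine sum_congr rfl fun x hx => ?_
      rw [sum_comm]
      exact sum_congr rfl fun y hy => (hF x y (hC x hx) (hC y hy)).symm

end IsGramKernelOnSphere

theorem isGramKernelOnSphere_const {c : ℝ} (hc : 0 ≤ c) :
    IsGramKernelOnSphere E fun _ => c :=
  ⟨Unit, inferInstance, fun _ _ => √c, fun _ _ _ _ => by simp [Real.mul_self_sqrt hc]⟩

theorem OrthonormalBasis.sum_inner_mul_inner_right {ι : Type*} [Fintype ι]
    (b : OrthonormalBasis ι ℝ E) (x y : E) : ∑ i, ⟪b i, x⟫ * ⟪b i, y⟫ = ⟪x, y⟫ := by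
  simp only [← b.sum_inner_mul_inner x y, real_inner_comm x]

theorem isGramKernelOnSphere_id [FiniteDimensional ℝ E] : IsGramKernelOnSphere E id :=
  let b := stdOrthonormalBasis ℝ E
  ⟨_, inferInstance, fun x i => ⟪b i, x⟫, fun x y _ _ => (b.sum_inner_mul_inner_right x y).symm⟩

theorem OrthonormalBasis.sum_inner_mul_inner_self {ι : Type*} [Fintype ι]
    (b : OrthonormalBasis ι ℝ E) {x : E} (hx : ‖x‖ = 1) : ∑ i, ⟪b i, x⟫ * ⟪b i, x⟫ = 1 := by
  rw [b.sum_inner_mul_inner_right, real_inner_self_eq_norm_sq, hx, one_pow]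

theorem isGramKernelOnSphere_monicGegenbauer2 [FiniteDimensional ℝ E] :
    IsGramKernelOnSphere E (monicGegenbauer2 (finrank ℝ E)) := by
  let b := stdOrthonormalBasis ℝ E
  refine ⟨_ × _, inferInstance, fun x p => tracelessSq (⟪b ·, x⟫) p.1 p.2, fun x y hx hy => ?_⟩
  rw [Fintype.sum_prod_type, sum_tracelessSq_mul _ _ (b.sum_inner_mul_inner_self hx)
    (b.sum_inner_mul_inner_self hy), b.sum_inner_mul_inner_right, Fintype.card_fin]

theorem isGramKernelOnSphere_monicGegenbauer4 [FiniteDimensional ℝ E] :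
    IsGramKernelOnSphere E (monicGegenbauer4 (finrank ℝ E)) := by
  let b := stdOrthonormalBasis ℝ E
  refine ⟨_ × _ × _ × _, inferInstance,
    fun x p => tracelessQuartic (⟪b ·, x⟫) p.1 p.2.1 p.2.2.1 p.2.2.2, fun x y hx hy => ?_⟩
  simp only [Fintype.sum_prod_type]
  rw [sum_tracelessQuartic_mul _ _ (b.sum_inner_mul_inner_self hx)
    (b.sum_inner_mul_inner_self hy), b.sum_inner_mul_inner_right, Fintype.card_fin]

end GramKernels

theorem IsGramKernelOnSphere.eq_zero_of_tight {E : Type*} [NormedAddCommGroup E]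
    [InnerProductSpace ℝ E] {P : ℝ → ℝ} {a : ℝ} (hP : IsGramKernelOnSphere E fun t => P t - a)
    {C : Finset E} (hC : ∀ x ∈ C, ‖x‖ = 1) (htight : P 1 = a * C.card)
    (hneg : ∀ x ∈ C, ∀ y ∈ C, x ≠ y → P ⟪x, y⟫ ≤ 0) :
    ∀ x ∈ C, ∀ y ∈ C, x ≠ y → P ⟪x, y⟫ = 0 := by
  classical
  have hrow : ∀ x ∈ C, ∑ y ∈ C, (P ⟪x, y⟫ - a) = ∑ y ∈ C.erase x, P ⟪x, y⟫ := by
    intro x hx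
    rw [sum_sub_distrib, ← add_sum_erase C _ hx, real_inner_self_eq_norm_sq, hC x hx, one_pow,
      htight, sum_const, nsmul_eq_mul]
    ring
  have hrow_nonpos : ∀ x ∈ C, ∑ y ∈ C.erase x, P ⟪x, y⟫ ≤ 0 := fun x hx =>
    sum_nonpos fun y hy => hneg x hx y (mem_of_mem_erase hy) (ne_of_mem_erase hy).symm
  have htotal : ∑ x ∈ C, ∑ y ∈ C.erase x, P ⟪x, y⟫ = 0 := by
    refine le_antisymm (sum_nonpos hrow_nonpos) ?_
    rw [← sum_congr rfl hrow]
    exact hP.sum_sum_nonneg hC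
  intro x hx y hy hxy
  refine (sum_eq_zero_iff_of_nonpos fun z hz => ?_).1
    ((sum_eq_zero_iff_of_nonpos hrow_nonpos).1 htotal x hx) y (mem_erase.2 ⟨hxy.symm, hy⟩)
  exact hneg x hx z (mem_of_mem_erase hz) (ne_of_mem_erase hz).symm

def e8DelsartePoly (t : ℝ) : ℝ := (2 * t - 1) * t ^ 2 * (2 * t + 1) ^ 2 * (t + 1)

theorem isGramKernelOnSphere_e8DelsartePoly_sub :
    IsGramKernelOnSphere (EuclideanSpace ℝ (Fin 8)) fun t => e8DelsartePoly t - 3 / 40 := by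
  have hc : ∀ c : ℝ, 0 ≤ c → IsGramKernelOnSphere (EuclideanSpace ℝ (Fin 8)) fun _ => c :=
    fun _ => isGramKernelOnSphere_const
  have ht := isGramKernelOnSphere_id (E := EuclideanSpace ℝ (Fin 8))
  have hG2 := isGramKernelOnSphere_monicGegenbauer2 (E := EuclideanSpace ℝ (Fin 8))
  have hG4 := isGramKernelOnSphere_monicGegenbauer4 (E := EuclideanSpace ℝ (Fin 8))
  rw [finrank_euclideanSpace_fin] at hG2 hG4
  have hsum := ((((hc 8 (by norm_num)).mul (ht.mul ht)).add (((hc 12 (by norm_num)).mul ht).add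
    (hc 6 (by norm_num)))).mul hG4).add
    ((((hc 3 (by norm_num)).mul ht).add (hc (9 / 5) (by norm_num))).mul hG2) |>.add
    ((hc (3 / 40) (by norm_num)).mul ht)
  convert hsum using 1
  ext t
  simp only [Pi.add_apply, Pi.mul_apply, id, e8DelsartePoly, monicGegenbauer2, monicGegenbauer4]
  norm_num
  ring

theorem e8DelsartePoly_nonpos {t : ℝ} (h₁ : -1 ≤ t) (h₂ : t ≤ 1 / 2) : e8DelsartePoly t ≤ 0 := by
  have : e8DelsartePoly t = (2 * t - 1) * (t * (2 * t + 1)) ^ 2 * (t + 1) := by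
    unfold e8DelsartePoly; ring
  rw [this]
  exact mul_nonpos_of_nonpos_of_nonneg
    (mul_nonpos_of_nonpos_of_nonneg (by linarith) (sq_nonneg _)) (by linarith)

theorem mem_of_e8DelsartePoly_eq_zero {t : ℝ} (h : e8DelsartePoly t = 0) :
    t ∈ ({-1, -(1/2), 0, 1/2} : Set ℝ) := by
  simp only [e8DelsartePoly, mul_eq_zero, pow_eq_zero_iff two_ne_zero] at h
  simp only [Set.mem_insert_iff, Set.mem_singleton_iff]
  rcases h with ((h | rfl) | h) | h
  · right; right; right; linarith
  · right; right; left; rfl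
  · right; left; linarith
  · left; linarith

/-- In a (240, 8, π/3) spherical code (a maximum kissing configuration in
dimension 8) all inner products between distinct points lie in
`{-1, -1/2, 0, 1/2}`. -/
theorem kissing_dim8_inner_products
    (C : Finset (EuclideanSpace ℝ (Fin 8))) (hcard : C.card = 240)
    (hCsph : ∀ x ∈ C, ‖x‖ = 1)
    (hCcode : ∀ x ∈ C, ∀ y ∈ C, x ≠ y → ⟪x, y⟫ ≤ 1/2) :
    ∀ u ∈ C, ∀ v ∈ C, u ≠ v →
      ⟪u, v⟫ ∈ ({-1, -(1/2), 0, 1/2} : Set ℝ) := by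
  intro u hu v hv huv
  have hneg : ∀ x ∈ C, ∀ y ∈ C, x ≠ y → e8DelsartePoly ⟪x, y⟫ ≤ 0 := fun x hx y hy hxy =>
    e8DelsartePoly_nonpos (neg_one_le_real_inner_of_norm_eq_one (hCsph x hx) (hCsph y hy))
      (hCcode x hx y hy hxy)
  have htight : e8DelsartePoly 1 = 3 / 40 * C.card := by
    rw [hcard]; norm_num [e8DelsartePoly]
  exact mem_of_e8DelsartePoly_eq_zero
    (isGramKernelOnSphere_e8DelsartePoly_sub.eq_zero_of_tight hCsph htight hneg u hu v hv huv)
end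

section
/- Let C be a (240, 8, π/3) spherical code on S⁷. Then its distance distribution is uniquely determined: A_{-1} = 1, A_{-1/2} = A_{1/2} = 56, A_0 = 126, and A_t = 0 for all other t ≠ 1. -/
open scoped RealInnerProductSpace

/-!
Delsarte's linear programming bound is tight for the 240 minimal vectors of `E₈`, and tightness
forces the distance distribution. Put `f(t) = (t + 1)(t + 1/2)²t²(t - 1/2)`, which is `≤ 0` on
`[-1, 1/2]` and has `f(1) = 9/4`. Its expansion in the Gegenbauer polynomials `G₂, G₄` of `S⁷` is
`f = 3/320 + 3/320·t + (9/40 + 3/8·t)·G₂ + (3/4 + 3/2·t + t²)·G₄`, and every kernel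
`⟪u, v⟫ʲ · Gₖ(⟪u, v⟫)` occurring here is positive semidefinite: `Gₖ(⟪u, v⟫)` is the Gram kernel
of the traceless part of `u^⊗k`, and Schur products of positive semidefinite matrices are positive
semidefinite. Summing over `C × C` gives
`540 + (nonnegative terms) = ∑ f(⟪u, v⟫) ≤ 240 · f(1) = 540`. Hence every inner product of
distinct points is a root of `f`, and the kernel sums of `t`, `G₂` and `t G₂` vanish; these three
moment equations, together with `∑ A_t = 240`, determine `A_t`.
-/

open Finset Matrix

theorem sum_comm_cycle {β M : Type*} [Fintype β] [AddCommMonoid M] (f : β → β → β → M) :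
    ∑ i, ∑ j, ∑ k, f i j k = ∑ j, ∑ k, ∑ i, f i j k := by
  rw [sum_comm]
  exact sum_congr rfl fun _ _ => sum_comm

section Tensors

variable {ι : Type*} [Fintype ι]

def pairTrace (T : ι → ι → ι → ι → ℝ) : Matrix ι ι ℝ :=
  of fun k l => ∑ i, (T i i k l + T i k i l + T i k l i + T k i i l + T k i l i + T k l i i)

theorem pairTrace_sub_div (T S : ι → ι → ι → ι → ℝ) (c : ℝ) :
    pairTrace (fun i j k l => T i j k l - S i j k l / c) = pairTrace T - c⁻¹ • pairTrace S := by
  ext k l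
  simp only [pairTrace, of_apply, Matrix.sub_apply, Matrix.smul_apply, smul_eq_mul, mul_sum,
    ← sum_sub_distrib]
  exact sum_congr rfl fun i _ => by ring

theorem pairTrace_tensorPow (b : ι → ℝ) :
    pairTrace (fun i j k l => b i * b j * b k * b l) = (6 * (b ⬝ᵥ b)) • vecMulVec b b := by
  ext k l
  simp only [pairTrace, of_apply, Matrix.smul_apply, vecMulVec_apply, dotProduct, smul_eq_mul,
    mul_sum, sum_mul]
  exact sum_congr rfl fun i _ => by ring

theorem sum_tensorPow_mul (a b : ι → ℝ) :
    ∑ i, ∑ j, ∑ k, ∑ l, a i * a j * a k * a l * (b i * b j * b k * b l) = (a ⬝ᵥ b) ^ 4 := by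
  simp only [dotProduct, pow_succ, pow_zero, one_mul, sum_mul, mul_sum]
  exact sum_congr rfl fun i _ => sum_congr rfl fun j _ => sum_congr rfl fun k _ =>
    sum_congr rfl fun l _ => by ring

theorem sum_vecMulVec_mul_vecMulVec (a b : ι → ℝ) :
    ∑ k, ∑ l, vecMulVec a a k l * vecMulVec b b k l = (a ⬝ᵥ b) ^ 2 := by
  simp only [vecMulVec_apply, dotProduct, sq, sum_mul_sum]
  exact sum_congr rfl fun k _ => sum_congr rfl fun l _ => by ring

variable [DecidableEq ι]

theorem sum_vecMulVec_mul_sub_smul_one (a b : ι → ℝ) (c : ℝ) :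
    ∑ k, ∑ l, vecMulVec b b k l * (vecMulVec a a - c • 1) k l = (a ⬝ᵥ b) ^ 2 - c * (b ⬝ᵥ b) := by
  simp only [Matrix.sub_apply, Matrix.smul_apply, smul_eq_mul, mul_sub, sum_sub_distrib,
    sum_vecMulVec_mul_vecMulVec, dotProduct_comm b a]
  simp [one_apply, dotProduct, mul_sum, vecMulVec_apply, mul_comm]

noncomputable def harmonicTensor2 (a : ι → ℝ) : Matrix ι ι ℝ :=
  vecMulVec a a - (Fintype.card ι : ℝ)⁻¹ • 1

theorem sum_harmonicTensor2_mul {a b : ι → ℝ} (ha : a ⬝ᵥ a = 1) (hb : b ⬝ᵥ b = 1) :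
    ∑ i, ∑ j, harmonicTensor2 a i j * harmonicTensor2 b i j =
      (a ⬝ᵥ b) ^ 2 - (Fintype.card ι : ℝ)⁻¹ := by
  have hn : (Fintype.card ι : ℝ) ≠ 0 := by
    have : Nonempty ι := by
      by_contra h
      simp [not_nonempty_iff.mp h, dotProduct] at ha
    positivity
  simp only [harmonicTensor2, Matrix.sub_apply (vecMulVec a a), sub_mul, sum_sub_distrib,
    sum_vecMulVec_mul_sub_smul_one, ha, dotProduct_comm b a]
  simp [one_apply, ← mul_sum, sum_sub_distrib, vecMulVec_apply,
    show ∑ i, b i * b i = 1 from hb, hn]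

def pairSum (Y : Matrix ι ι ℝ) (i j k l : ι) : ℝ :=
  (1 : Matrix ι ι ℝ) i j * Y k l + (1 : Matrix ι ι ℝ) i k * Y j l + (1 : Matrix ι ι ℝ) i l * Y j k
    + (1 : Matrix ι ι ℝ) j k * Y i l + (1 : Matrix ι ι ℝ) j l * Y i k
    + (1 : Matrix ι ι ℝ) k l * Y i j

theorem sum_mul_pairSum (T : ι → ι → ι → ι → ℝ) (Y : Matrix ι ι ℝ) :
    ∑ i, ∑ j, ∑ k, ∑ l, T i j k l * pairSum Y i j k l = ∑ k, ∑ l, pairTrace T k l * Y k l := by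
  simp only [pairSum, pairTrace, one_apply, of_apply, mul_add, add_mul, sum_add_distrib, ite_mul,
    mul_ite, one_mul, mul_zero, zero_mul, sum_ite_eq, sum_ite_irrel, sum_const_zero, mem_univ,
    if_true, sum_mul]
  congr 1; congr 1; congr 1; congr 1; congr 1
  all_goals first | exact sum_comm_cycle _ | exact sum_congr rfl fun _ _ => sum_comm

theorem pairTrace_pairSum {Y : Matrix ι ι ℝ} (hY : Y.IsSymm) :
    pairTrace (pairSum Y) = (6 * (Fintype.card ι + 4) : ℝ) • Y + (6 * Y.trace) • 1 := by
  ext k l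
  simp [pairTrace, pairSum, one_apply, sum_add_distrib, Matrix.trace, hY.apply]
  split_ifs <;> ring

/- The traceless part of `a ⊗ a ⊗ a ⊗ a` for a unit vector `a`; the shift by `-1 / (2(n + 2))`
inside `pairSum` produces its `δ ⊗ δ` terms. -/
noncomputable def harmonicTensor4 (a : ι → ℝ) : ι → ι → ι → ι → ℝ := fun i j k l =>
  a i * a j * a k * a l -
    pairSum (vecMulVec a a - (2 * (Fintype.card ι + 2) : ℝ)⁻¹ • 1) i j k l / (Fintype.card ι + 4)

theorem pairTrace_harmonicTensor4 {a : ι → ℝ} (ha : a ⬝ᵥ a = 1) :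
    pairTrace (harmonicTensor4 a) = 0 := by
  have hY : (vecMulVec a a - (2 * (Fintype.card ι + 2) : ℝ)⁻¹ • (1 : Matrix ι ι ℝ)).IsSymm := by
    simp [Matrix.IsSymm, transpose_vecMulVec]
  unfold harmonicTensor4
  rw [pairTrace_sub_div, pairTrace_pairSum hY, pairTrace_tensorPow, ha]
  ext k l
  simp [trace_vecMulVec, ha, one_apply]
  split_ifs <;> field_simp <;> ring

theorem sum_mul_harmonicTensor4 (T : ι → ι → ι → ι → ℝ) (b : ι → ℝ) :
    ∑ i, ∑ j, ∑ k, ∑ l, T i j k l * harmonicTensor4 b i j k l =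
      ∑ i, ∑ j, ∑ k, ∑ l, T i j k l * (b i * b j * b k * b l) -
        (∑ k, ∑ l, pairTrace T k l * (vecMulVec b b - (2 * (Fintype.card ι + 2) : ℝ)⁻¹ • 1) k l) /
          (Fintype.card ι + 4) := by
  rw [← sum_mul_pairSum, sum_div]
  simp only [harmonicTensor4, mul_sub, sum_sub_distrib, sum_div, mul_div_assoc]

theorem sum_harmonicTensor4_mul {a b : ι → ℝ} (ha : a ⬝ᵥ a = 1) (hb : b ⬝ᵥ b = 1) :
    ∑ i, ∑ j, ∑ k, ∑ l, harmonicTensor4 a i j k l * harmonicTensor4 b i j k l =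
      (a ⬝ᵥ b) ^ 4 - 6 * (a ⬝ᵥ b) ^ 2 / (Fintype.card ι + 4) +
        3 / ((Fintype.card ι + 2) * (Fintype.card ι + 4)) := by
  have hcomm : ∑ i, ∑ j, ∑ k, ∑ l, harmonicTensor4 a i j k l * (b i * b j * b k * b l) =
      ∑ i, ∑ j, ∑ k, ∑ l, (b i * b j * b k * b l) * harmonicTensor4 a i j k l := by
    simp only [mul_comm]
  rw [sum_mul_harmonicTensor4, pairTrace_harmonicTensor4 ha, hcomm, sum_mul_harmonicTensor4,
    pairTrace_tensorPow, sum_tensorPow_mul, hb, dotProduct_comm b a]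
  simp only [Matrix.zero_apply, zero_mul, sum_const_zero, zero_div, sub_zero, Matrix.smul_apply,
    smul_eq_mul, mul_assoc, ← mul_sum, sum_vecMulVec_mul_sub_smul_one, hb]
  field_simp
  ring

end Tensors

/- The Gegenbauer polynomials `C₂^λ` and `C₄^λ`, `λ = (n - 2) / 2`, normalised to be monic:
the zonal spherical harmonics of degree 2 and 4 on `Sⁿ⁻¹`. -/
noncomputable def gegenbauer2 (n t : ℝ) : ℝ := t ^ 2 - n⁻¹

noncomputable def gegenbauer4 (n t : ℝ) : ℝ := t ^ 4 - 6 * t ^ 2 / (n + 4) + 3 / ((n + 2) * (n + 4))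

section Kernels

variable {ι m : Type*} [Fintype ι]

noncomputable def innerKernel (f : ℝ → ℝ) (x : m → EuclideanSpace ℝ ι) : Matrix m m ℝ :=
  of fun i j => f ⟪x i, x j⟫

theorem EuclideanSpace.real_inner_eq_dotProduct (x y : EuclideanSpace ℝ ι) :
    ⟪x, y⟫ = x.ofLp ⬝ᵥ y.ofLp := by
  rw [EuclideanSpace.inner_eq_star_dotProduct, star_trivial, dotProduct_comm]

theorem EuclideanSpace.ofLp_dotProduct_ofLp_self (x : EuclideanSpace ℝ ι) :
    x.ofLp ⬝ᵥ x.ofLp = ‖x‖ ^ 2 := by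
  rw [← EuclideanSpace.real_inner_eq_dotProduct, real_inner_self_eq_norm_sq]

theorem Matrix.PosSemidef.innerKernel_mul {f g : ℝ → ℝ} {x : m → EuclideanSpace ℝ ι}
    (hf : (innerKernel f x).PosSemidef) (hg : (innerKernel g x).PosSemidef) :
    (innerKernel (f * g) x).PosSemidef :=
  hf.hadamard hg

variable [Fintype m]

theorem posSemidef_sum_mul {κ : Type*} [Fintype κ] (φ : m → κ → ℝ) :
    (of fun i j => ∑ p, φ i p * φ j p).PosSemidef := by
  convert posSemidef_conjTranspose_mul_self (of fun p i => φ i p) using 1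
  ext i j
  simp [Matrix.mul_apply]

theorem Matrix.PosSemidef.sum_sum_nonneg {A : Matrix m m ℝ} (hA : A.PosSemidef) :
    0 ≤ ∑ i, ∑ j, A i j := by
  simpa [dotProduct, mulVec, mul_sum] using hA.dotProduct_mulVec_nonneg 1

theorem posSemidef_innerKernel_id (x : m → EuclideanSpace ℝ ι) :
    (innerKernel id x).PosSemidef :=
  posSemidef_gram ℝ x

variable [DecidableEq ι]

theorem posSemidef_innerKernel_gegenbauer2 {x : m → EuclideanSpace ℝ ι} (hx : ∀ i, ‖x i‖ = 1) :
    (innerKernel (gegenbauer2 (Fintype.card ι)) x).PosSemidef := by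
  have hx' : ∀ i, (x i).ofLp ⬝ᵥ (x i).ofLp = 1 := fun i => by
    rw [EuclideanSpace.ofLp_dotProduct_ofLp_self, hx, one_pow]
  convert posSemidef_sum_mul fun i (p : ι × ι) => harmonicTensor2 (x i).ofLp p.1 p.2 using 1
  ext i j
  simp [innerKernel, gegenbauer2, Fintype.sum_prod_type, sum_harmonicTensor2_mul (hx' i) (hx' j),
    EuclideanSpace.real_inner_eq_dotProduct]

theorem posSemidef_innerKernel_gegenbauer4 {x : m → EuclideanSpace ℝ ι} (hx : ∀ i, ‖x i‖ = 1) :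
    (innerKernel (gegenbauer4 (Fintype.card ι)) x).PosSemidef := by
  have hx' : ∀ i, (x i).ofLp ⬝ᵥ (x i).ofLp = 1 := fun i => by
    rw [EuclideanSpace.ofLp_dotProduct_ofLp_self, hx, one_pow]
  convert posSemidef_sum_mul fun i (p : ι × ι × ι × ι) =>
    harmonicTensor4 (x i).ofLp p.1 p.2.1 p.2.2.1 p.2.2.2 using 1
  ext i j
  simp [innerKernel, gegenbauer4, Fintype.sum_prod_type, sum_harmonicTensor4_mul (hx' i) (hx' j),
    EuclideanSpace.real_inner_eq_dotProduct]

end Kernels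

theorem sum_sum_inner_nonneg {ι : Type*} [Fintype ι] {C : Finset (EuclideanSpace ℝ ι)}
    {f : ℝ → ℝ} (h : (innerKernel f ((↑) : C → EuclideanSpace ℝ ι)).PosSemidef) :
    0 ≤ ∑ u ∈ C, ∑ v ∈ C, f ⟪u, v⟫ := by
  refine h.sum_sum_nonneg.trans_eq ?_
  exact (sum_congr rfl fun u _ => sum_coe_sort C (fun v => f ⟪u.1, v⟫)).trans
    (sum_coe_sort C fun u => ∑ v ∈ C, f ⟪u, v⟫)

section DistanceDistribution

variable {α : Type*} {s : Finset α}

theorem sum_sum_eq_sum_mul_card {β : Type*} [DecidableEq β] (F : α → α → β) {T : Finset β}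
    (hT : ∀ u ∈ s, ∀ v ∈ s, F u v ∈ T) (g : β → ℝ) :
    ∑ u ∈ s, ∑ v ∈ s, g (F u v) = ∑ t ∈ T, (∑ u ∈ s, (#{v ∈ s | F u v = t} : ℝ)) * g t := by
  have hfiber : ∀ u ∈ s, ∑ v ∈ s, g (F u v) = ∑ t ∈ T, (#{v ∈ s | F u v = t} : ℝ) * g t := by
    intro u hu
    rw [← sum_fiberwise_of_maps_to (hT u hu)]
    refine sum_congr rfl fun t _ => ?_
    rw [sum_congr rfl fun v hv => by rw [(mem_filter.mp hv).2], sum_const, nsmul_eq_mul]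
  rw [sum_congr rfl hfiber, sum_comm]
  simp only [sum_mul]

theorem sum_card_filter_eq_zero {β : Type*} [DecidableEq β] {F : α → α → β} {T : Finset β}
    (hT : ∀ u ∈ s, ∀ v ∈ s, F u v ∈ T) {t : β} (ht : t ∉ T) :
    ∑ u ∈ s, (#{v ∈ s | F u v = t} : ℝ) = 0 := by
  refine sum_eq_zero fun u hu => ?_
  rw [Nat.cast_eq_zero, card_eq_zero, filter_eq_empty_iff]
  rintro v hv rfl
  exact ht (hT u hu v hv)

variable [DecidableEq α] {K : α → α → ℝ} {c : ℝ}

theorem sum_sum_eq_mul_card_add (hdiag : ∀ u ∈ s, K u u = c) :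
    ∑ u ∈ s, ∑ v ∈ s, K u v = c * #s + ∑ u ∈ s, ∑ v ∈ s.erase u, K u v := by
  rw [card_eq_sum_ones, Nat.cast_sum, mul_sum, ← sum_add_distrib]
  refine sum_congr rfl fun u hu => ?_
  rw [← add_sum_erase s _ hu, hdiag u hu, Nat.cast_one, mul_one]

theorem sum_sum_le_mul_card (hdiag : ∀ u ∈ s, K u u = c)
    (hoff : ∀ u ∈ s, ∀ v ∈ s, u ≠ v → K u v ≤ 0) :
    ∑ u ∈ s, ∑ v ∈ s, K u v ≤ c * #s := by
  rw [sum_sum_eq_mul_card_add hdiag, add_le_iff_nonpos_right]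
  exact sum_nonpos fun u hu => sum_nonpos fun v hv =>
    hoff u hu v (mem_of_mem_erase hv) (ne_of_mem_erase hv).symm

theorem eq_zero_of_mul_card_le_sum_sum (hdiag : ∀ u ∈ s, K u u = c)
    (hoff : ∀ u ∈ s, ∀ v ∈ s, u ≠ v → K u v ≤ 0) (hsum : c * #s ≤ ∑ u ∈ s, ∑ v ∈ s, K u v) :
    ∀ u ∈ s, ∀ v ∈ s, u ≠ v → K u v = 0 := by
  have hoff' : ∀ u ∈ s, ∀ v ∈ s.erase u, K u v ≤ 0 := fun u hu v hv =>
    hoff u hu v (mem_of_mem_erase hv) (ne_of_mem_erase hv).symm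
  have hzero : ∑ u ∈ s, ∑ v ∈ s.erase u, K u v = 0 := by
    rw [sum_sum_eq_mul_card_add hdiag] at hsum
    exact le_antisymm (sum_nonpos fun u hu => sum_nonpos (hoff' u hu)) (by linarith)
  intro u hu v hv huv
  rw [sum_eq_zero_iff_of_nonpos fun u hu => sum_nonpos (hoff' u hu)] at hzero
  exact (sum_eq_zero_iff_of_nonpos (hoff' u hu)).mp (hzero u hu) v (mem_erase.mpr ⟨huv.symm, hv⟩)

end DistanceDistribution

theorem filter_inner_eq_one_eq_singleton {E : Type*} [NormedAddCommGroup E] [InnerProductSpace ℝ E]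
    [DecidableEq E] {C : Finset E} (hsph : ∀ x ∈ C, ‖x‖ = 1)
    (hcode : ∀ x ∈ C, ∀ y ∈ C, x ≠ y → ⟪x, y⟫ < 1) {u : E} (hu : u ∈ C) :
    {v ∈ C | ⟪u, v⟫ = 1} = {u} := by
  ext v
  simp only [mem_filter, mem_singleton]
  constructor
  · rintro ⟨hv, h⟩
    by_contra huv
    exact (hcode u hu v hv (Ne.symm huv)).ne h
  · rintro rfl
    exact ⟨hu, by rw [real_inner_self_eq_norm_sq, hsph v hu, one_pow]⟩

noncomputable def kissing8Poly (t : ℝ) : ℝ := (t + 1) * (t + 1 / 2) ^ 2 * t ^ 2 * (t - 1 / 2)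

theorem kissing8Poly_nonpos {t : ℝ} (h1 : -1 ≤ t) (h2 : t ≤ 1 / 2) : kissing8Poly t ≤ 0 :=
  mul_nonpos_of_nonneg_of_nonpos
    (mul_nonneg (mul_nonneg (by linarith) (sq_nonneg _)) (sq_nonneg _))
    (by linarith)

theorem mem_of_kissing8Poly_eq_zero {t : ℝ} (h : kissing8Poly t = 0) :
    t ∈ ({-1, -(1 / 2), 0, 1 / 2} : Finset ℝ) := by
  simp only [kissing8Poly, mul_eq_zero, pow_eq_zero_iff two_ne_zero, sub_eq_zero,
    add_eq_zero_iff_eq_neg] at h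
  simp only [mem_insert, mem_singleton]
  tauto

theorem kissing8Poly_eq_gegenbauer (t : ℝ) :
    kissing8Poly t = 3 / 320 + (3 / 320 * t + 9 / 40 * gegenbauer2 8 t
      + 3 / 8 * (t * gegenbauer2 8 t) + 3 / 4 * gegenbauer4 8 t + 3 / 2 * (t * gegenbauer4 8 t)
      + t * (t * gegenbauer4 8 t)) := by
  simp only [kissing8Poly, gegenbauer2, gegenbauer4]
  ring

theorem kissing8_lp_equality (C : Finset (EuclideanSpace ℝ (Fin 8))) (hcard : #C = 240)
    (hsph : ∀ x ∈ C, ‖x‖ = 1) (hcode : ∀ x ∈ C, ∀ y ∈ C, x ≠ y → ⟪x, y⟫ ≤ 1 / 2) :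
    (∀ u ∈ C, ∀ v ∈ C, u ≠ v → kissing8Poly ⟪u, v⟫ = 0) ∧
      ∑ u ∈ C, ∑ v ∈ C, ⟪u, v⟫ = 0 ∧
      ∑ u ∈ C, ∑ v ∈ C, gegenbauer2 8 ⟪u, v⟫ = 0 ∧
      ∑ u ∈ C, ∑ v ∈ C, ⟪u, v⟫ * gegenbauer2 8 ⟪u, v⟫ = 0 := by
  have hx : ∀ u : C, ‖(u : EuclideanSpace ℝ (Fin 8))‖ = 1 := fun u => hsph u u.2
  have hT := posSemidef_innerKernel_id ((↑) : C → EuclideanSpace ℝ (Fin 8))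
  have hG2 := posSemidef_innerKernel_gegenbauer2 hx
  have hG4 := posSemidef_innerKernel_gegenbauer4 hx
  have s1 := sum_sum_inner_nonneg hT
  have s2 := sum_sum_inner_nonneg hG2
  have s3 := sum_sum_inner_nonneg (hT.innerKernel_mul hG2)
  have s4 := sum_sum_inner_nonneg hG4
  have s5 := sum_sum_inner_nonneg (hT.innerKernel_mul hG4)
  have s6 := sum_sum_inner_nonneg (hT.innerKernel_mul (hT.innerKernel_mul hG4))
  simp only [Pi.mul_apply, id, Fintype.card_fin, Nat.cast_ofNat] at s1 s2 s3 s4 s5 s6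
  have hdiag : ∀ u ∈ C, kissing8Poly ⟪u, u⟫ = 9 / 4 := fun u hu => by
    rw [real_inner_self_eq_norm_sq, hsph u hu]; norm_num [kissing8Poly]
  have hoff : ∀ u ∈ C, ∀ v ∈ C, u ≠ v → kissing8Poly ⟪u, v⟫ ≤ 0 := fun u hu v hv huv =>
    kissing8Poly_nonpos (neg_one_le_real_inner_of_norm_eq_one (hsph u hu) (hsph v hv))
      (hcode u hu v hv huv)
  have hsplit : ∑ u ∈ C, ∑ v ∈ C, kissing8Poly ⟪u, v⟫ = 9 / 4 * #C
      + (3 / 320 * ∑ u ∈ C, ∑ v ∈ C, ⟪u, v⟫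
      + 9 / 40 * ∑ u ∈ C, ∑ v ∈ C, gegenbauer2 8 ⟪u, v⟫
      + 3 / 8 * ∑ u ∈ C, ∑ v ∈ C, ⟪u, v⟫ * gegenbauer2 8 ⟪u, v⟫
      + 3 / 4 * ∑ u ∈ C, ∑ v ∈ C, gegenbauer4 8 ⟪u, v⟫
      + 3 / 2 * ∑ u ∈ C, ∑ v ∈ C, ⟪u, v⟫ * gegenbauer4 8 ⟪u, v⟫
      + ∑ u ∈ C, ∑ v ∈ C, ⟪u, v⟫ * (⟪u, v⟫ * gegenbauer4 8 ⟪u, v⟫)) := by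
    simp only [kissing8Poly_eq_gegenbauer, sum_add_distrib, ← mul_sum, sum_const, hcard,
      nsmul_eq_mul]
    norm_num
  have hle := sum_sum_le_mul_card hdiag hoff
  exact ⟨eq_zero_of_mul_card_le_sum_sum hdiag hoff (by linarith), by linarith, by linarith,
    by linarith⟩

open Classical in
/-- The distance distribution of a (240, 8, π/3) spherical code is uniquely
determined: `A₋₁ = 1`, `A₋₁/₂ = A₁/₂ = 56`, `A₀ = 126`, and `A t = 0` for all
other `t ≠ 1`. -/
theorem kissing_dim8_distance_distribution
    (C : Finset (EuclideanSpace ℝ (Fin 8))) (hcard : C.card = 240)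
    (hCsph : ∀ x ∈ C, ‖x‖ = 1)
    (hCcode : ∀ x ∈ C, ∀ y ∈ C, x ≠ y → ⟪x, y⟫ ≤ 1/2)
    (A : ℝ → ℝ)
    (hA : ∀ t, A t = (1 / 240 : ℝ) *
      ∑ u ∈ C, ((C.filter (fun v => ⟪u, v⟫ = t)).card : ℝ)) :
    A (-1) = 1 ∧ A (-(1/2)) = 56 ∧ A (1/2) = 56 ∧ A 0 = 126 ∧
    ∀ t : ℝ, t ≠ 1 → t ∉ ({-1, -(1/2), 0, 1/2} : Set ℝ) → A t = 0 := by
  obtain ⟨hroots, h1, h2, h3⟩ := kissing8_lp_equality C hcard hCsph hCcode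
  have hmem : ∀ u ∈ C, ∀ v ∈ C, ⟪u, v⟫ ∈ ({1, -1, -(1 / 2), 0, 1 / 2} : Finset ℝ) := by
    intro u hu v hv
    rcases eq_or_ne u v with rfl | huv
    · simp [hCsph u hu]
    · exact mem_insert_of_mem (mem_of_kissing8Poly_eq_zero (hroots u hu v hv huv))
  have hB1 : ∑ u ∈ C, (#{v ∈ C | ⟪u, v⟫ = 1} : ℝ) = 240 := by
    rw [sum_congr rfl fun u hu => by rw [filter_inner_eq_one_eq_singleton hCsph
      (fun x hx y hy hxy => (hCcode x hx y hy hxy).trans_lt (by norm_num)) hu]]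
    simp [hcard]
  have hdist := fun g => sum_sum_eq_sum_mul_card (fun u v => ⟪u, v⟫) hmem g
  have e0 := hdist fun _ => 1
  have e1 := hdist id
  have e2 := hdist (gegenbauer2 8)
  have e3 := hdist fun t => t * gegenbauer2 8 t
  simp only [id, sum_const, hcard, h1, h2, h3] at e0 e1 e2 e3
  norm_num [sum_insert, gegenbauer2, hB1] at e0 e1 e2 e3
  simp only [hA]
  refine ⟨by linarith, by linarith, by linarith, by linarith, fun t ht1 ht => ?_⟩
  rw [sum_card_filter_eq_zero hmem, mul_zero]
  simpa [ht1] using ht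
end

section
/- Let θ ≤ π/2 and let m ∈ {1,…,n}. Let a ∈ (-√((1+(m-1)cos θ)/m), -√((1+m·cos θ)/(m+1))) and T = [-1, a]. Fix e ∈ S^{n-1}. Then the maximum size of a spherical code C ⊂ S^{n-1} with pairwise inner products ≤ cos θ such that c·e ∈ T for every c ∈ C equals m. -/
/-!
If unit vectors `x₁, …, x_N` have pairwise inner products `≤ cos θ` and `⟪xᵢ, e⟫ ≤ a ≤ 0`, then
`(N a)² ≤ ⟪∑ xᵢ, e⟫² ≤ ‖∑ xᵢ‖² ≤ N (1 + (N - 1) cos θ)`, which is impossible for `N > m` as soon as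
`(m + 1) a² > 1 + m cos θ`.

Conversely, reflecting an orthonormal `m`-frame so that its sum points along `e` yields vectors
`wᵢ ⊥ e` with `⟪wᵢ, wⱼ⟫ = δᵢⱼ - 1/m` (a regular simplex in `eᗮ`). The vectors `a e + k wᵢ`,
with `k² = m (1 - a²) / (m - 1)`, are unit vectors at height `a` whose pairwise inner products
`a² - (1 - a²) / (m - 1)` are `≤ cos θ` exactly when `m a² ≤ 1 + (m - 1) cos θ`.
-/

open scoped RealInnerProductSpace
open Finset Module

section

variable {E : Type*} [NormedAddCommGroup E] [InnerProductSpace ℝ E]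

theorem Orthonormal.norm_sum_eq_sqrt_card {ι : Type*} [Fintype ι] {f : ι → E}
    (hf : Orthonormal ℝ f) : ‖∑ i, f i‖ = √(Fintype.card ι) := by
  classical
  rw [eq_comm, Real.sqrt_eq_iff_eq_sq (Nat.cast_nonneg _) (norm_nonneg _),
    ← real_inner_self_eq_norm_sq]
  simp only [sum_inner, inner_sum, orthonormal_iff_ite.mp hf]
  simp

theorem exists_orthonormal_sum_eq_smul [FiniteDimensional ℝ E] {m : ℕ}
    (hm : m ≤ finrank ℝ E) {e : E} (he : ‖e‖ = 1) :
    ∃ g : Fin m → E, Orthonormal ℝ g ∧ ∑ i, g i = √m • e := by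
  let f : Fin m → E := stdOrthonormalBasis ℝ E ∘ Fin.castLE hm
  have hf : Orthonormal ℝ f :=
    (stdOrthonormalBasis ℝ E).orthonormal.comp _ (Fin.castLE_injective hm)
  let R := (ℝ ∙ (∑ i, f i - √m • e))ᗮ.reflection
  refine ⟨R ∘ f, hf.comp_linearIsometryEquiv R, ?_⟩
  rw [Function.comp_def, ← map_sum]
  exact Submodule.reflection_sub
    (by simp [norm_smul, he, hf.norm_sum_eq_sqrt_card, abs_of_nonneg])

theorem exists_inner_eq_zero_inner_eq_ite_sub_inv [FiniteDimensional ℝ E] {m : ℕ}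
    (hm : m ≤ finrank ℝ E) {e : E} (he : ‖e‖ = 1) :
    ∃ w : Fin m → E, (∀ i, ⟪w i, e⟫ = 0) ∧
      ∀ i j, ⟪w i, w j⟫ = (if i = j then 1 else 0) - (m : ℝ)⁻¹ := by
  obtain ⟨g, hg, hsum⟩ := exists_orthonormal_sum_eq_smul hm he
  have hge : ∀ i, ⟪g i, e⟫ = (√m)⁻¹ := by
    intro i
    refine eq_inv_of_mul_eq_one_right ?_
    rw [← inner_smul_right, ← hsum, inner_sum]
    simp [orthonormal_iff_ite.mp hg]
  refine ⟨fun i => g i - (√m)⁻¹ • e, fun i => ?_, fun i j => ?_⟩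
  · simp [inner_sub_left, inner_smul_left, hge, he]
  · have hm0 : (0 : ℝ) < m := Nat.cast_pos.2 (Fin.pos i)
    simp only [inner_sub_left, inner_sub_right, real_inner_smul_left, real_inner_smul_right,
      hge, real_inner_comm _ e, inner_self_eq_one_of_norm_eq_one he, orthonormal_iff_ite.mp hg]
    field_simp
    rw [Real.sq_sqrt hm0.le]
    ring

theorem exists_injective_unit_inner_le_inner_eq [FiniteDimensional ℝ E] {m : ℕ} (hm2 : 2 ≤ m)
    (hm : m ≤ finrank ℝ E) {e : E} (he : ‖e‖ = 1) {a c : ℝ} (ha : a ^ 2 < 1)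
    (h : m * a ^ 2 ≤ 1 + (m - 1) * c) :
    ∃ x : Fin m → E, Function.Injective x ∧ (∀ i, ‖x i‖ = 1) ∧
      (∀ i j, i ≠ j → ⟪x i, x j⟫ ≤ c) ∧ ∀ i, ⟪x i, e⟫ = a := by
  obtain ⟨w, hwe, hww⟩ := exists_inner_eq_zero_inner_eq_ite_sub_inv hm he
  have hm1 : (0 : ℝ) < m - 1 := by
    rw [sub_pos]
    exact_mod_cast hm2
  have hee : ⟪e, e⟫ = 1 := inner_self_eq_one_of_norm_eq_one he
  set k := √(m * (1 - a ^ 2) / (m - 1))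
  have hk : k ^ 2 = m * (1 - a ^ 2) / (m - 1) :=
    Real.sq_sqrt (div_nonneg (by nlinarith) hm1.le)
  let x i := a • e + k • w i
  have hx : ∀ i j, ⟪x i, x j⟫ = a ^ 2 + k ^ 2 * ((if i = j then 1 else 0) - (m : ℝ)⁻¹) := by
    intro i j
    simp only [x, inner_add_left, inner_add_right, real_inner_smul_left, real_inner_smul_right,
      hwe, real_inner_comm _ e, hee, hww]
    ring
  have hdiag : ∀ i, ⟪x i, x i⟫ = 1 := by
    intro i
    rw [hx, if_pos rfl, hk]
    field_simp [hm1.ne']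
    ring
  have hoff : ∀ i j, i ≠ j → ⟪x i, x j⟫ = a ^ 2 - (1 - a ^ 2) / (m - 1) := by
    intro i j hij
    rw [hx, if_neg hij, hk]
    field_simp [hm1.ne']
    ring
  refine ⟨x, fun i j hij => ?_, fun i => ?_, fun i j hij => ?_, fun i => ?_⟩
  · by_contra hne
    have hone := hoff i j hne
    rw [hij, hdiag] at hone
    have : 0 < (1 - a ^ 2) / (m - 1) := div_pos (by linarith) hm1
    linarith
  · rw [← pow_eq_one_iff_of_nonneg (norm_nonneg _) two_ne_zero, ← real_inner_self_eq_norm_sq,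
      hdiag]
  · rw [hoff i j hij, sub_le_comm, le_div_iff₀ hm1]
    linarith
  · simp only [x, inner_add_left, real_inner_smul_left, hwe, hee]
    ring

theorem exists_cap_code [FiniteDimensional ℝ E] {m : ℕ} (hm1 : 1 ≤ m) (hm : m ≤ finrank ℝ E)
    {e : E} (he : ‖e‖ = 1) {a c : ℝ} (hc : c ≤ 1) (h : m * a ^ 2 < 1 + (m - 1) * c) :
    ∃ C : Finset E, (∀ x ∈ C, ‖x‖ = 1) ∧ (∀ x ∈ C, ∀ y ∈ C, x ≠ y → ⟪x, y⟫ ≤ c) ∧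
      (∀ x ∈ C, ⟪x, e⟫ ∈ Set.Icc (-1) a) ∧ #C = m := by
  classical
  have hm1' : (1 : ℝ) ≤ m := by exact_mod_cast hm1
  have ha : a ^ 2 < 1 := by nlinarith
  have ha1 : -1 ≤ a := by nlinarith
  obtain rfl | hm2 := hm1.eq_or_lt
  · refine ⟨{-e}, by simp [he], by simp, ?_, rfl⟩
    simp [he, ha1]
  · obtain ⟨x, hx, hx1, hxx, hxe⟩ :=
      exists_injective_unit_inner_le_inner_eq hm2 hm he ha h.le
    refine ⟨univ.image x, ?_, ?_, ?_, by rw [card_image_of_injective _ hx, card_fin]⟩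
    · simp [hx1]
    · simp only [mem_image, mem_univ, true_and]
      rintro _ ⟨i, rfl⟩ _ ⟨j, rfl⟩ hij
      exact hxx i j (ne_of_apply_ne x hij)
    · simp [hxe, ha1]

theorem norm_sum_sq_le_of_inner_le {C : Finset E} {c : ℝ} (hC1 : ∀ x ∈ C, ‖x‖ = 1)
    (hC2 : ∀ x ∈ C, ∀ y ∈ C, x ≠ y → ⟪x, y⟫ ≤ c) :
    ‖∑ x ∈ C, x‖ ^ 2 ≤ #C * (1 + (#C - 1) * c) := by
  classical
  have hrow : ∀ x ∈ C, ∑ y ∈ C, ⟪x, y⟫ ≤ 1 + (#C - 1) * c := by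
    intro x hx
    rw [← add_sum_erase C _ hx, real_inner_self_eq_norm_sq, hC1 x hx, one_pow]
    gcongr
    calc ∑ y ∈ C.erase x, ⟪x, y⟫ ≤ #(C.erase x) • c :=
          sum_le_card_nsmul _ _ _ fun y hy =>
            hC2 x hx y (mem_of_mem_erase hy) (ne_of_mem_erase hy).symm
      _ = (#C - 1) * c := by
          rw [nsmul_eq_mul, card_erase_of_mem hx, Nat.cast_pred (card_pos.2 ⟨x, hx⟩)]
  calc ‖∑ x ∈ C, x‖ ^ 2 = ∑ x ∈ C, ∑ y ∈ C, ⟪x, y⟫ := by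
        rw [← real_inner_self_eq_norm_sq, sum_inner]
        simp only [inner_sum]
    _ ≤ #C • (1 + (#C - 1) * c) := sum_le_card_nsmul _ _ _ hrow
    _ = #C * (1 + (#C - 1) * c) := nsmul_eq_mul _ _

theorem card_mul_neg_le_norm_sum {C : Finset E} {e : E} {a : ℝ} (he : ‖e‖ = 1)
    (hC : ∀ x ∈ C, ⟪x, e⟫ ≤ a) : #C * -a ≤ ‖∑ x ∈ C, x‖ :=
  calc (#C : ℝ) * -a = -(#C • a) := by rw [nsmul_eq_mul, mul_neg]
    _ ≤ -∑ x ∈ C, ⟪x, e⟫ := neg_le_neg (sum_le_card_nsmul _ _ _ hC)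
    _ = ⟪∑ x ∈ C, x, -e⟫ := by rw [inner_neg_right, sum_inner]
    _ ≤ ‖∑ x ∈ C, x‖ := by simpa [he] using real_inner_le_norm (∑ x ∈ C, x) (-e)

theorem card_le_of_inner_le {C : Finset E} {e : E} {a c : ℝ} {m : ℕ} (he : ‖e‖ = 1)
    (hC1 : ∀ x ∈ C, ‖x‖ = 1) (hC2 : ∀ x ∈ C, ∀ y ∈ C, x ≠ y → ⟪x, y⟫ ≤ c)
    (hC3 : ∀ x ∈ C, ⟪x, e⟫ ≤ a) (ha : a ≤ 0) (hc : c ≤ 1) (h : 1 + m * c < (m + 1) * a ^ 2) :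
    #C ≤ m := by
  by_contra! hCm
  have hN : (m : ℝ) + 1 ≤ #C := by exact_mod_cast hCm
  have hN0 : (0 : ℝ) < #C := by linarith [(m.cast_nonneg : (0 : ℝ) ≤ m)]
  have hsq : ((#C : ℝ) * -a) ^ 2 ≤ ‖∑ x ∈ C, x‖ ^ 2 := by
    gcongr
    · exact mul_nonneg hN0.le (neg_nonneg.2 ha)
    · exact card_mul_neg_le_norm_sum he hC3
  have hcard : (#C : ℝ) * (a ^ 2 - c) ≤ 1 - c := by
    nlinarith [norm_sum_sq_le_of_inner_le hC1 hC2]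
  have hgap : 0 < a ^ 2 - c := by nlinarith
  nlinarith

end

theorem cap_code_max_size_general (n m : ℕ) (θ a : ℝ)
    (hm1 : 1 ≤ m) (hmn : m ≤ n)
    (ha : a ∈ Set.Ioo
      (-Real.sqrt ((1 + ((m : ℝ) - 1) * Real.cos θ) / m))
      (-Real.sqrt ((1 + (m : ℝ) * Real.cos θ) / (m + 1))))
    (e : EuclideanSpace ℝ (Fin n)) (he : ‖e‖ = 1) :
    IsGreatest {N : ℕ | ∃ C : Finset (EuclideanSpace ℝ (Fin n)),
      (∀ x ∈ C, ‖x‖ = 1) ∧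
      (∀ x ∈ C, ∀ y ∈ C, x ≠ y → ⟪x, y⟫ ≤ Real.cos θ) ∧
      (∀ x ∈ C, ⟪x, e⟫ ∈ Set.Icc (-1 : ℝ) a) ∧
      C.card = N} m := by
  obtain ⟨haL, haU⟩ := ha
  have ha0 : a < 0 := haU.trans_le (neg_nonpos.2 (Real.sqrt_nonneg _))
  have hlow : m * a ^ 2 < 1 + (m - 1) * Real.cos θ := by
    rw [← lt_div_iff₀' (by exact_mod_cast hm1)]
    simpa using (Real.lt_sqrt (neg_nonneg.2 ha0.le)).1 (neg_lt.1 haL)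
  have hup : 1 + m * Real.cos θ < (m + 1) * a ^ 2 := by
    rw [← div_lt_iff₀' (by positivity)]
    simpa using (Real.sqrt_lt' (neg_pos.2 ha0)).1 (lt_neg.1 haU)
  refine ⟨exists_cap_code hm1 (by rwa [finrank_euclideanSpace_fin]) he (Real.cos_le_one θ) hlow,
    ?_⟩
  rintro N ⟨C, hC1, hC2, hC3, rfl⟩
  exact card_le_of_inner_le he hC1 hC2 (fun x hx => (hC3 x hx).2) ha0.le (Real.cos_le_one θ) hup

/-- Bezdek–Musin type bound for codes in a spherical cap: for `θ ≤ π/2`,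
`1 ≤ m ≤ n` and `a` in the stated interval, the maximum size of a `θ`-code
lying in the cap `{x : x·e ∈ [-1, a]}` is exactly `m`. -/
theorem cap_code_max_size (n m : ℕ) (θ a : ℝ)
    (hθ : θ ≤ Real.pi / 2) (hm1 : 1 ≤ m) (hmn : m ≤ n)
    (ha : a ∈ Set.Ioo
      (-Real.sqrt ((1 + ((m : ℝ) - 1) * Real.cos θ) / m))
      (-Real.sqrt ((1 + (m : ℝ) * Real.cos θ) / (m + 1))))
    (e : EuclideanSpace ℝ (Fin n)) (he : ‖e‖ = 1) :
    IsGreatest {N : ℕ | ∃ C : Finset (EuclideanSpace ℝ (Fin n)),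
      (∀ x ∈ C, ‖x‖ = 1) ∧
      (∀ x ∈ C, ∀ y ∈ C, x ≠ y → ⟪x, y⟫ ≤ Real.cos θ) ∧
      (∀ x ∈ C, ⟪x, e⟫ ∈ Set.Icc (-1 : ℝ) a) ∧
      C.card = N} m :=
  cap_code_max_size_general n m θ a hm1 hmn ha e he
end
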